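/- (Policy iteration for linear systems = Kleinman iteration) Let A ∈ ℝ^{n×n}, B ∈ ℝ^{n×m}, Q = Qᵀ > 0, R = Rᵀ > 0, and let K₀ be such that A + BK₀ is Hurwitz. Define iteratively: P_i as the unique symmetric solution of the Lyapunov equation P_i(A + BK_i) + (A + BK_i)ᵀP_i = -Q - K_iᵀRK_i, and K_{i+1} = -R⁻¹BᵀP_i. Then each P_i is symmetric positive definite, and each A + BK_{i+1} is Hurwitz, so the iteration is well-defined for all i. -/

import Mathlib

/-!
Write `M_i = A + B K_i`. If `M_i` is Hurwitz then `P_i` is positive definite: every trajectory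
`x(t) = exp (t M_i) x` tends to `0` (split `x` into generalized eigenvectors of the complexified
matrix; on each, `exp (t M_i)` acts as `e^{tμ}` times a polynomial in `t`), while
`V(t) = x(t)ᵀ P_i x(t)` has derivative `-x(t)ᵀ (Q + K_iᵀ R K_i) x(t) < 0`, so `V(0) > lim V = 0`.
Since `Bᵀ P_i = -R K_{i+1}`, completing the square turns the Lyapunov equation of `M_i` into
`P_i M_{i+1} + M_{i+1}ᵀ P_i = -(Q + (K_{i+1} - K_i)ᵀ R (K_{i+1} - K_i) + K_{i+1}ᵀ R K_{i+1})`,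
a negative definite right-hand side. For an eigenvector `u` of `M_{i+1}` with eigenvalue `μ` this
reads `2 Re μ · u* P_i u < 0`, so `M_{i+1}` is Hurwitz, and the claim follows by induction on `i`.
-/

open Matrix

/-- A real square matrix is Hurwitz if all its (complex) eigenvalues have negative
real part. -/
def IsHurwitz {n : ℕ} (M : Matrix (Fin n) (Fin n) ℝ) : Prop :=
  ∀ μ ∈ spectrum ℂ (M.map (algebraMap ℝ ℂ)), μ.re < 0

open NormedSpace Filter Topology
open scoped Nat ComplexOrder

theorem tendsto_cexp_mul_mul_pow_atTop {μ : ℂ} (hμ : μ.re < 0) (k : ℕ) :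
    Tendsto (fun t : ℝ => Complex.exp (t * μ) * (t : ℂ) ^ k) atTop (𝓝 0) := by
  rw [tendsto_zero_iff_norm_tendsto_zero]
  refine (tendsto_rpow_mul_exp_neg_mul_atTop_nhds_zero k (-μ.re) (by linarith)).congr' ?_
  filter_upwards [eventually_ge_atTop 0] with t ht
  simp [Complex.norm_exp, abs_of_nonneg ht, Real.rpow_natCast, mul_comm]

theorem Matrix.conjTranspose_map_algebraMap_complex {m n : Type*} (X : Matrix m n ℝ) :
    (X.map (algebraMap ℝ ℂ))ᴴ = Xᵀ.map (algebraMap ℝ ℂ) := by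
  rw [← conjTranspose_eq_transpose_of_trivial,
    conjTranspose_map (algebraMap ℝ ℂ) fun r => (Complex.conj_ofReal r).symm]

section Calculus

variable {𝕜 ι : Type*} [NontriviallyNormedField 𝕜] [Fintype ι]

theorem HasDerivAt.dotProduct {f g : 𝕜 → ι → 𝕜} {f' g' : ι → 𝕜} {t : 𝕜}
    (hf : HasDerivAt f f' t) (hg : HasDerivAt g g' t) :
    HasDerivAt (fun s => f s ⬝ᵥ g s) (f' ⬝ᵥ g t + f t ⬝ᵥ g') t := by
  have := HasDerivAt.fun_sum (u := Finset.univ) fun i _ =>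
    (hasDerivAt_pi.1 hf i).mul (hasDerivAt_pi.1 hg i)
  rwa [Finset.sum_add_distrib] at this

theorem HasDerivAt.const_mulVec {κ : Type*} [Fintype κ] (A : Matrix κ ι 𝕜) {f : 𝕜 → ι → 𝕜}
    {f' : ι → 𝕜} {t : 𝕜} (hf : HasDerivAt f f' t) :
    HasDerivAt (fun s => A *ᵥ f s) (A *ᵥ f') t :=
  hasDerivAt_pi.2 fun i =>
    HasDerivAt.fun_sum (u := Finset.univ) fun j _ => (hasDerivAt_pi.1 hf j).const_mul (A i j)

end Calculus

namespace Matrix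

variable {ι : Type*} [Fintype ι]

theorem re_star_dotProduct_map_mulVec (X : Matrix ι ι ℝ) (u : ι → ℂ) :
    (star u ⬝ᵥ X.map (algebraMap ℝ ℂ) *ᵥ u).re =
      (fun i => (u i).re) ⬝ᵥ X *ᵥ (fun i => (u i).re) +
        (fun i => (u i).im) ⬝ᵥ X *ᵥ (fun i => (u i).im) := by
  simp only [dotProduct, mulVec, Matrix.map_apply, Pi.star_apply, Complex.re_sum,
    Finset.mul_sum, ← Finset.sum_add_distrib]
  refine Finset.sum_congr rfl fun j _ => Finset.sum_congr rfl fun k _ => ?_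
  simp [Complex.mul_re, Complex.mul_im]

theorem PosDef.map_algebraMap_complex {X : Matrix ι ι ℝ} (hX : X.PosDef) :
    (X.map (algebraMap ℝ ℂ)).PosDef := by
  have hherm : (X.map (algebraMap ℝ ℂ)).IsHermitian := by
    rw [IsHermitian, conjTranspose_map_algebraMap_complex, ← conjTranspose_eq_transpose_of_trivial,
      hX.1.eq]
  refine .of_dotProduct_mulVec_pos hherm fun u hu => Complex.lt_def.2 ⟨?_, ?_⟩
  · have hpos : ∀ a : ι → ℝ, a ≠ 0 → 0 < a ⬝ᵥ X *ᵥ a := fun a ha => by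
      simpa using hX.dotProduct_mulVec_pos ha
    have hnonneg : ∀ a : ι → ℝ, 0 ≤ a ⬝ᵥ X *ᵥ a := fun a => by
      simpa using hX.posSemidef.dotProduct_mulVec_nonneg a
    rw [Complex.zero_re, re_star_dotProduct_map_mulVec]
    by_cases hre : (fun i => (u i).re) = 0
    · have him : (fun i => (u i).im) ≠ 0 := fun him =>
        hu (funext fun i => Complex.ext (congrFun hre i) (congrFun him i))
      linarith [hpos _ him, hnonneg fun i => (u i).re]
    · linarith [hpos _ hre, hnonneg fun i => (u i).im]
  · exact (hherm.im_star_dotProduct_mulVec_self u).symm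

variable [DecidableEq ι]

theorem re_neg_of_mem_spectrum_of_lyapunov {N P T : Matrix ι ι ℂ} (hP : P.PosDef)
    (hT : T.PosDef) (h : P * N + Nᴴ * P = -T) {μ : ℂ} (hμ : μ ∈ spectrum ℂ N) : μ.re < 0 := by
  rw [← spectrum_toLin', ← Module.End.hasEigenvalue_iff_mem_spectrum] at hμ
  obtain ⟨u, hu⟩ := hμ.exists_hasEigenvector
  have hNu : N *ᵥ u = μ • u := by simpa using hu.apply_eq_smul
  have key : (μ + star μ) * (star u ⬝ᵥ P *ᵥ u) = -(star u ⬝ᵥ T *ᵥ u) := by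
    rw [← dotProduct_neg, ← neg_mulVec, ← h, add_mulVec, dotProduct_add, ← mulVec_mulVec,
      ← mulVec_mulVec, hNu, dotProduct_mulVec (star u) Nᴴ, ← star_mulVec, hNu, star_smul,
      mulVec_smul, dotProduct_smul, smul_dotProduct, smul_eq_mul, smul_eq_mul, add_mul]
  by_contra hre
  have h2 : 0 ≤ μ + star μ := by
    rw [Complex.star_def, Complex.add_conj]
    exact_mod_cast by linarith
  have := mul_nonneg h2 (hP.dotProduct_mulVec_pos hu.2).le
  rw [key] at this
  exact (hT.dotProduct_mulVec_pos hu.2).not_ge (neg_nonneg.1 this)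

theorem exp_mulVec_eq_sum_of_pow_mulVec_eq_zero {W : Matrix ι ι ℂ} {v : ι → ℂ} {K : ℕ}
    (hv : W ^ K *ᵥ v = 0) :
    exp W *ᵥ v = ∑ k ∈ Finset.range K, (k ! : ℂ)⁻¹ • (W ^ k *ᵥ v) := by
  let : NormedRing (Matrix ι ι ℂ) := Matrix.linftyOpNormedRing
  let : NormedAlgebra ℂ (Matrix ι ι ℂ) := Matrix.linftyOpNormedAlgebra
  have hsum := (exp_series_hasSum_exp' (𝕂 := ℂ) W).map (mulVec.addMonoidHomLeft v)
    (continuous_id.matrix_mulVec continuous_const)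
  simp only [Function.comp_def, mulVec.addMonoidHomLeft, AddMonoidHom.coe_mk, ZeroHom.coe_mk,
    smul_mulVec] at hsum
  refine hsum.unique (hasSum_sum_of_ne_finset_zero fun k hk => ?_)
  rw [Finset.mem_range, not_lt] at hk
  rw [← Nat.sub_add_cancel hk, pow_add, ← mulVec_mulVec, hv, mulVec_zero, smul_zero]

theorem exp_smul_eq_cexp_smul_exp_smul_sub (N : Matrix ι ι ℂ) (μ : ℂ) (t : ℝ) :
    exp (t • N) = Complex.exp (t * μ) • exp (t • (N - μ • 1)) := by
  let : NormedRing (Matrix ι ι ℂ) := Matrix.linftyOpNormedRing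
  let : NormedAlgebra ℂ (Matrix ι ι ℂ) := Matrix.linftyOpNormedAlgebra
  have hsplit : t • N = algebraMap ℂ _ (t * μ) + t • (N - μ • 1) := by
    rw [Algebra.algebraMap_eq_smul_one, ← Complex.coe_smul, ← Complex.coe_smul, smul_sub,
      smul_smul]
    abel
  rw [hsplit, exp_add_of_commute _ _ (Algebra.commute_algebraMap_left _ _)]
  -- `erw`: the goal's `exp` uses the product topology, the lemma's the (defeq) operator-norm one
  erw [← algebraMap_exp_comm (𝕂 := ℂ) (𝔸 := Matrix ι ι ℂ)]
  rw [Algebra.algebraMap_eq_smul_one, smul_one_mul, Complex.exp_eq_exp_ℂ]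

theorem tendsto_exp_smul_mulVec_of_mem_maxGenEigenspace {N : Matrix ι ι ℂ} {μ : ℂ}
    (hμ : μ.re < 0) {v : ι → ℂ} (hv : v ∈ Module.End.maxGenEigenspace (toLin' N) μ) :
    Tendsto (fun t : ℝ => exp (t • N) *ᵥ v) atTop (𝓝 0) := by
  obtain ⟨K, hK⟩ := (Module.End.mem_maxGenEigenspace _ _ _).1 hv
  set W := N - μ • 1
  have hWK : W ^ K *ᵥ v = 0 := by
    rwa [← toLin'_apply, toLin'_pow, map_sub, map_smul, toLin'_one]
  have hformula : ∀ t : ℝ, exp (t • N) *ᵥ v =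
      ∑ k ∈ Finset.range K, (Complex.exp (t * μ) * (t : ℂ) ^ k * (k ! : ℂ)⁻¹) • (W ^ k *ᵥ v) := by
    intro t
    have htK : ((t : ℂ) • W) ^ K *ᵥ v = 0 := by rw [smul_pow, smul_mulVec, hWK, smul_zero]
    rw [exp_smul_eq_cexp_smul_exp_smul_sub N μ, smul_mulVec, ← Complex.coe_smul,
      exp_mulVec_eq_sum_of_pow_mulVec_eq_zero htK, Finset.smul_sum]
    refine Finset.sum_congr rfl fun k _ => ?_
    rw [smul_pow, smul_mulVec, smul_smul, smul_smul]
    ring_nf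
  simp only [hformula]
  rw [show (0 : ι → ℂ) = ∑ k ∈ Finset.range K, (0 : ℂ) • (W ^ k *ᵥ v) by simp]
  refine tendsto_finsetSum _ fun k _ => ?_
  have hk := ((tendsto_cexp_mul_mul_pow_atTop hμ k).mul_const (k ! : ℂ)⁻¹).smul_const (W ^ k *ᵥ v)
  rwa [zero_mul] at hk

theorem tendsto_exp_smul_mulVec_of_forall_re_neg {N : Matrix ι ι ℂ}
    (hN : ∀ μ ∈ spectrum ℂ N, μ.re < 0) (v : ι → ℂ) :
    Tendsto (fun t : ℝ => exp (t • N) *ᵥ v) atTop (𝓝 0) := by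
  have hv : v ∈ ⨆ μ, Module.End.maxGenEigenspace (toLin' N) μ := by
    rw [Module.End.iSup_maxGenEigenspace_eq_top]
    trivial
  induction hv using Submodule.iSup_induction' with
  | mem μ w hw =>
    rcases eq_or_ne w 0 with rfl | hw0
    · simp
    refine tendsto_exp_smul_mulVec_of_mem_maxGenEigenspace (hN μ ?_) hw
    have hμ : Module.End.HasEigenvalue (toLin' N) μ := Module.End.HasUnifEigenvalue.lt zero_lt_one
      fun hbot => hw0 ((Submodule.mem_bot ℂ).1 (hbot ▸ hw))
    rw [← spectrum_toLin']
    exact hμ.mem_spectrum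
  | zero => simp
  | add w₁ w₂ _ _ h₁ h₂ => simpa only [mulVec_add, add_zero] using h₁.add h₂

theorem map_exp_algebraMap_complex (M : Matrix ι ι ℝ) :
    (exp M).map (algebraMap ℝ ℂ) = exp (M.map (algebraMap ℝ ℂ)) := by
  let : NormedRing (Matrix ι ι ℝ) := Matrix.linftyOpNormedRing
  let : NormedRing (Matrix ι ι ℂ) := Matrix.linftyOpNormedRing
  let : NormedAlgebra ℝ (Matrix ι ι ℝ) := Matrix.linftyOpNormedAlgebra
  let : NormedAlgebra ℚ (Matrix ι ι ℝ) := NormedAlgebra.restrictScalars ℚ ℝ _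
  exact map_exp (algebraMap ℝ ℂ).mapMatrix (continuous_id.matrix_map Complex.continuous_ofReal) M

theorem hasDerivAt_exp_smul_mulVec (M : Matrix ι ι ℝ) (x : ι → ℝ) (t : ℝ) :
    HasDerivAt (fun s : ℝ => exp (s • M) *ᵥ x) (M *ᵥ (exp (t • M) *ᵥ x)) t := by
  let : NormedRing (Matrix ι ι ℝ) := Matrix.linftyOpNormedRing
  let : NormedAlgebra ℝ (Matrix ι ι ℝ) := Matrix.linftyOpNormedAlgebra
  let : NormedAlgebra ℚ (Matrix ι ι ℝ) := NormedAlgebra.restrictScalars ℚ ℝ _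
  let L : Matrix ι ι ℝ →L[ℝ] ι → ℝ :=
    LinearMap.toContinuousLinearMap ((LinearMap.applyₗ x).comp toLin'.toLinearMap)
  rw [mulVec_mulVec]
  exact L.hasFDerivAt.comp_hasDerivAt t (hasDerivAt_exp_smul_const' M t)

end Matrix

section Lyapunov

variable {n : ℕ}

theorem IsHurwitz.tendsto_exp_smul_mulVec {M : Matrix (Fin n) (Fin n) ℝ} (hM : IsHurwitz M)
    (x : Fin n → ℝ) : Tendsto (fun t : ℝ => exp (t • M) *ᵥ x) atTop (𝓝 0) := by
  have hC := tendsto_exp_smul_mulVec_of_forall_re_neg hM (fun i => (x i : ℂ))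
  have hre : Continuous fun w : Fin n → ℂ => fun i => (w i).re := by fun_prop
  convert (hre.tendsto 0).comp hC using 1
  · funext t i
    have hmap : (t • M).map (algebraMap ℝ ℂ) = t • M.map (algebraMap ℝ ℂ) :=
      Matrix.map_smul' _ _ _ fun _ _ => map_mul _ _ _
    have := congrArg Complex.re (RingHom.map_mulVec (algebraMap ℝ ℂ) (exp (t • M)) x i)
    rwa [map_exp_algebraMap_complex, hmap] at this
  · simp [Pi.zero_def]

theorem IsHurwitz.posDef_of_lyapunov {M P S : Matrix (Fin n) (Fin n) ℝ} (hM : IsHurwitz M)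
    (hP : P.IsSymm) (hS : S.PosDef) (h : P * M + Mᵀ * P = -S) : P.PosDef := by
  refine .of_dotProduct_mulVec_pos (isHermitian_iff_isSymm.2 hP) fun x hx => ?_
  set y := fun t : ℝ => exp (t • M) *ᵥ x
  set V := fun t : ℝ => y t ⬝ᵥ P *ᵥ y t
  have hy0 : ∀ t, y t ≠ 0 := fun t hyt => hx <|
    mulVec_injective_iff_isUnit.2 (isUnit_exp (t • M)) (hyt.trans (mulVec_zero _).symm)
  have hV' : ∀ t, HasDerivAt V (-(y t ⬝ᵥ S *ᵥ y t)) t := by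
    intro t
    have hy := hasDerivAt_exp_smul_mulVec M x t
    refine (hy.dotProduct (hy.const_mulVec P)).congr_deriv ?_
    rw [← dotProduct_neg, ← neg_mulVec, ← h, add_mulVec, dotProduct_add, add_comm,
      ← mulVec_mulVec, ← mulVec_mulVec, dotProduct_mulVec (y t) Mᵀ, vecMul_transpose]
  have hanti : StrictAnti V := strictAnti_of_deriv_neg fun t => by
    rw [(hV' t).deriv, neg_lt_zero]
    simpa using hS.dotProduct_mulVec_pos (hy0 t)
  have hlim : Tendsto V atTop (𝓝 0) := by
    have hq : Continuous fun z : Fin n → ℝ => z ⬝ᵥ P *ᵥ z :=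
      continuous_id.dotProduct (continuous_const.matrix_mulVec continuous_id)
    exact (hq.tendsto' 0 0 (by simp)).comp (hM.tendsto_exp_smul_mulVec x)
  calc 0 ≤ V 1 := hanti.antitone.le_of_tendsto hlim 1
    _ < V 0 := hanti zero_lt_one
    _ = star x ⬝ᵥ P *ᵥ x := by simp [V, y]

theorem isHurwitz_of_lyapunov {M P T : Matrix (Fin n) (Fin n) ℝ} (hP : P.PosDef)
    (hT : T.PosDef) (h : P * M + Mᵀ * P = -T) : IsHurwitz M := by
  intro μ hμ
  refine re_neg_of_mem_spectrum_of_lyapunov hP.map_algebraMap_complex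
    hT.map_algebraMap_complex ?_ hμ
  have := congrArg (algebraMap ℝ ℂ).mapMatrix h
  simp only [map_add, map_mul, map_neg, RingHom.mapMatrix_apply] at this
  rwa [conjTranspose_map_algebraMap_complex]

end Lyapunov

theorem Matrix.lyapunov_closedLoop_update {α ι κ : Type*} [CommRing α] [Fintype ι] [Fintype κ]
    {A P Q : Matrix ι ι α} {B : Matrix ι κ α} {R : Matrix κ κ α} {K K' : Matrix κ ι α}
    (hP : P.IsSymm) (hR : R.IsSymm) (hBP : Bᵀ * P = -(R * K'))
    (h : P * (A + B * K) + (A + B * K)ᵀ * P = -(Q + Kᵀ * R * K)) :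
    P * (A + B * K') + (A + B * K')ᵀ * P = -(Q + (K' - K)ᵀ * R * (K' - K) + K'ᵀ * R * K') := by
  have hPB : P * B = -(K'ᵀ * R) := by
    rw [← hP.eq, ← transpose_transpose B, ← transpose_mul, hBP, transpose_neg, transpose_mul,
      hR.eq]
  have hsplit : P * (A + B * K') + (A + B * K')ᵀ * P = P * (A + B * K) + (A + B * K)ᵀ * P
      + P * B * (K' - K) + (K' - K)ᵀ * (Bᵀ * P) := by
    simp only [transpose_add, transpose_mul, transpose_sub, Matrix.mul_add, Matrix.add_mul,
      Matrix.mul_sub, Matrix.sub_mul, Matrix.mul_assoc]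
    abel
  rw [hsplit, h, hPB, hBP]
  simp only [transpose_sub, Matrix.neg_mul, Matrix.mul_neg, Matrix.mul_sub, Matrix.sub_mul,
    Matrix.mul_assoc]
  abel

/-- **Policy iteration for linear systems (Kleinman iteration).** With `Q, R` symmetric
positive definite, `K₀` stabilizing, `P_i` the symmetric solution of the Lyapunov
equation `P_i(A+BK_i) + (A+BK_i)ᵀP_i = -Q - K_iᵀRK_i` and `K_{i+1} = -R⁻¹BᵀP_i`,
every `P_i` is positive definite and every `A + BK_{i+1}` is Hurwitz, so the
iteration is well-defined for all `i`. -/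
theorem kleinman_iteration_well_defined {n m : ℕ}
    (A : Matrix (Fin n) (Fin n) ℝ) (B : Matrix (Fin n) (Fin m) ℝ)
    (Q : Matrix (Fin n) (Fin n) ℝ) (R : Matrix (Fin m) (Fin m) ℝ)
    (hQ : Q.PosDef) (hR : R.PosDef)
    (K : ℕ → Matrix (Fin m) (Fin n) ℝ) (P : ℕ → Matrix (Fin n) (Fin n) ℝ)
    (hK0 : IsHurwitz (A + B * K 0))
    (hPsymm : ∀ i, (P i).IsSymm)
    (hLyap : ∀ i, P i * (A + B * K i) + (A + B * K i)ᵀ * P i = -(Q + (K i)ᵀ * R * K i))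
    (hKupd : ∀ i, K (i + 1) = -(R⁻¹ * Bᵀ * P i)) :
    ∀ i, (P i).PosDef ∧ IsHurwitz (A + B * K (i + 1)) := by
  have hBP : ∀ i, Bᵀ * P i = -(R * K (i + 1)) := fun i => by
    rw [hKupd, Matrix.mul_assoc, Matrix.mul_neg, mul_nonsing_inv_cancel_left _ _
      ((isUnit_iff_isUnit_det R).1 hR.isUnit), neg_neg]
  have hcost : ∀ C : Matrix (Fin m) (Fin n) ℝ, (Cᵀ * R * C).PosSemidef := fun C => by
    simpa using hR.posSemidef.conjTranspose_mul_mul_same C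
  have step : ∀ i, IsHurwitz (A + B * K i) →
      (P i).PosDef ∧ IsHurwitz (A + B * K (i + 1)) := fun i hi => by
    have hPi := hi.posDef_of_lyapunov (hPsymm i) (hQ.add_posSemidef (hcost _)) (hLyap i)
    exact ⟨hPi, isHurwitz_of_lyapunov hPi
      ((hQ.add_posSemidef (hcost _)).add_posSemidef (hcost _))
      (lyapunov_closedLoop_update (hPsymm i) (isHermitian_iff_isSymm.1 hR.isHermitian)
        (hBP i) (hLyap i))⟩
  intro i
  induction i with
  | zero => exact step 0 hK0
  | succ i ih => exact step (i + 1) ih.2
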